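/- arXiv:1811.12757 — 2 statements merged into one kernel-verified Lean document; each statement's English description precedes it below -/
import Mathlib

section
/- Let S(t,x) = (2πt)^{-k/2} exp(-‖x‖²/(2t)). There exists a constant N₀ > 0 such that for all t > 0 and x, y ∈ ℝ^k, ∫_{ℝ^k} |S(t, x+z) - S(t, y+z)| dz ≤ N₀ · min(‖x - y‖/t^{1/2}, 1). -/
/-!
Translating by `x`, the integral only depends on `w = y - x`, and since the kernel is radial
and a reflection maps `w` to `‖w‖ e₀`, only on `‖w‖`. Along a coordinate axis the kernel
factors into one-dimensional Gaussian densities `p`, all but one of which integrate to `1`, so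
the integral is the `L¹` distance between two translates of `p` at distance `r = ‖x - y‖`.
As `p` decreases in `|s|`, that distance is `2 ∫_{-r/2}^{r/2} p ≤ 2 p(0) r ≤ r / √t`; it is also
at most `2` because `p` is a probability density.
-/

open Real MeasureTheory

noncomputable def heatKernel (k : ℕ) (t : ℝ) (x : EuclideanSpace ℝ (Fin k)) : ℝ :=
  (2 * Real.pi * t) ^ (-(k : ℝ) / 2) * Real.exp (-‖x‖ ^ 2 / (2 * t))

open Set NNReal ProbabilityTheory

lemma setIntegral_Ioi_comp_add_right (f : ℝ → ℝ) (a r : ℝ) :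
    ∫ s in Ioi a, f (s + r) = ∫ s in Ioi (a + r), f s := by
  have h := (measurePreserving_add_right volume r).setIntegral_preimage_emb
    (measurableEmbedding_addRight r) f (Ioi (a + r))
  simpa only [preimage_add_const_Ioi, add_sub_cancel_right] using h

lemma setIntegral_Iic_comp_add_right (f : ℝ → ℝ) (a r : ℝ) :
    ∫ s in Iic a, f (s + r) = ∫ s in Iic (a + r), f s := by
  have h := (measurePreserving_add_right volume r).setIntegral_preimage_emb
    (measurableEmbedding_addRight r) f (Iic (a + r))
  simpa only [preimage_add_const_Iic, add_sub_cancel_right] using h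

section RadiallyDecreasing

variable {f : ℝ → ℝ}

lemma integral_abs_sub_comp_add_le_two_mul_integral (hf0 : 0 ≤ f) (hf : Integrable f) (r : ℝ) :
    ∫ s, |f s - f (s + r)| ≤ 2 * ∫ s, f s := by
  have hfr : Integrable fun s ↦ f (s + r) := hf.comp_add_right r
  calc ∫ s, |f s - f (s + r)| ≤ ∫ s, (f s + f (s + r)) :=
        integral_mono (hf.sub hfr).abs (hf.add hfr) fun s ↦ by
          simpa [abs_of_nonneg (hf0 s), abs_of_nonneg (hf0 (s + r))] using abs_sub (f s) (f (s + r))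
    _ = 2 * ∫ s, f s := by
        rw [integral_add hf hfr, integral_add_right_eq_self (fun s ↦ f s) r]
        ring

variable (hf : Integrable f) (hmono : ∀ u v, |u| ≤ |v| → f v ≤ f u)
include hf hmono

lemma intervalIntegral_le_sub_mul_apply_zero {a b : ℝ} (hab : a ≤ b) :
    ∫ s in a..b, f s ≤ (b - a) * f 0 := by
  calc ∫ s in a..b, f s ≤ ∫ _ in a..b, f 0 :=
        intervalIntegral.integral_mono_on hab hf.intervalIntegrable intervalIntegrable_const
          fun s _ ↦ hmono 0 s (by simp)
    _ = (b - a) * f 0 := by simp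

lemma integral_abs_sub_comp_add_le_of_nonneg {r : ℝ} (hr : 0 ≤ r) :
    ∫ s, |f s - f (s + r)| ≤ 2 * f 0 * r := by
  set m := -r / 2 with hm
  have hfr : Integrable fun s ↦ f (s + r) := hf.comp_add_right r
  have hright : ∫ s in Ioi m, |f s - f (s + r)| = ∫ s in m..m + r, f s := by
    have hsign : ∀ s ∈ Ioi m, |f s - f (s + r)| = f s - f (s + r) := fun s (hs : m < s) ↦
      abs_of_nonneg <| sub_nonneg.2 <| hmono _ _ <| sq_le_sq.1 <| by
        nlinarith [mul_nonneg hr (by linarith : 0 ≤ 2 * s + r)]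
    rw [setIntegral_congr_fun measurableSet_Ioi hsign,
      integral_sub hf.integrableOn hfr.integrableOn, setIntegral_Ioi_comp_add_right,
      intervalIntegral.integral_Ioi_sub_Ioi hf.integrableOn (by linarith)]
  have hleft : ∫ s in Iic m, |f s - f (s + r)| = ∫ s in m..m + r, f s := by
    have hsign : ∀ s ∈ Iic m, |f s - f (s + r)| = f (s + r) - f s := fun s (hs : s ≤ m) ↦ by
      rw [abs_sub_comm]
      exact abs_of_nonneg <| sub_nonneg.2 <| hmono _ _ <| sq_le_sq.1 <| by
        nlinarith [mul_nonneg hr (by linarith : 0 ≤ -(2 * s + r))]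
    rw [setIntegral_congr_fun measurableSet_Iic hsign,
      integral_sub hfr.integrableOn hf.integrableOn, setIntegral_Iic_comp_add_right,
      intervalIntegral.integral_Iic_sub_Iic hf.integrableOn hf.integrableOn]
  calc ∫ s, |f s - f (s + r)|
      = (∫ s in Iic m, |f s - f (s + r)|) + ∫ s in Ioi m, |f s - f (s + r)| :=
        (intervalIntegral.integral_Iic_add_Ioi (hf.sub hfr).abs.integrableOn
          (hf.sub hfr).abs.integrableOn).symm
    _ ≤ 2 * f 0 * r := by
        rw [hleft, hright]
        linarith [intervalIntegral_le_sub_mul_apply_zero hf hmono (by linarith : m ≤ m + r)]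

lemma integral_abs_sub_comp_add_le (r : ℝ) : ∫ s, |f s - f (s + r)| ≤ 2 * f 0 * |r| := by
  rcases le_total 0 r with hr | hr
  · rw [abs_of_nonneg hr]
    exact integral_abs_sub_comp_add_le_of_nonneg hf hmono hr
  · rw [abs_of_nonpos hr, ← integral_add_right_eq_self (fun s ↦ |f s - f (s + r)|) (-r)]
    simp_rw [neg_add_cancel_right, abs_sub_comm (f _) (f _)]
    exact integral_abs_sub_comp_add_le_of_nonneg hf hmono (neg_nonneg.2 hr)

end RadiallyDecreasing

lemma gaussianPDFReal_zero_le_of_abs_le (v : ℝ≥0) {x y : ℝ} (h : |x| ≤ |y|) :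
    gaussianPDFReal 0 v y ≤ gaussianPDFReal 0 v x := by
  simp only [gaussianPDFReal, sub_zero]
  gcongr ?_ * rexp (-?_ / _)
  exact sq_le_sq.2 h

lemma two_mul_gaussianPDFReal_zero_zero_le (v : ℝ≥0) : 2 * gaussianPDFReal 0 v 0 ≤ (√v)⁻¹ := by
  have htwo : 2 ≤ √(2 * π) := Real.le_sqrt_of_sq_le (by nlinarith [pi_gt_three])
  simp only [gaussianPDFReal, sub_self, zero_pow two_ne_zero, neg_zero, zero_div, exp_zero,
    mul_one]
  rw [Real.sqrt_mul (by positivity), mul_inv, ← mul_assoc]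
  exact mul_le_of_le_one_left (by positivity)
    (by rw [← div_eq_mul_inv, div_le_one (by positivity)]; exact htwo)

lemma integral_abs_gaussianPDFReal_sub_comp_add_le {v : ℝ≥0} (hv : v ≠ 0) (r : ℝ) :
    ∫ s, |gaussianPDFReal 0 v s - gaussianPDFReal 0 v (s + r)| ≤ 2 * min (|r| / √v) 1 := by
  rw [mul_min_of_nonneg _ _ zero_le_two]
  refine le_min ?_ ?_
  · calc _ ≤ 2 * gaussianPDFReal 0 v 0 * |r| :=
          integral_abs_sub_comp_add_le (integrable_gaussianPDFReal 0 v)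
            (fun _ _ ↦ gaussianPDFReal_zero_le_of_abs_le v) r
      _ ≤ (√v)⁻¹ * |r| := by gcongr; exact two_mul_gaussianPDFReal_zero_zero_le v
      _ ≤ 2 * (|r| / √v) := by
          rw [inv_mul_eq_div]
          linarith [show 0 ≤ |r| / √v by positivity]
  · calc _ ≤ 2 * ∫ s, gaussianPDFReal 0 v s :=
          integral_abs_sub_comp_add_le_two_mul_integral (gaussianPDFReal_nonneg 0 v)
            (integrable_gaussianPDFReal 0 v) r
      _ = 2 * 1 := by rw [integral_gaussianPDFReal_eq_one 0 hv]

lemma integral_abs_prod_sub_prod_add_single {ι : Type*} [Fintype ι] [DecidableEq ι]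
    {f : ℝ → ℝ} (hf0 : 0 ≤ f) (hf1 : ∫ s, f s = 1) (j : ι) (r : ℝ) :
    ∫ z : ι → ℝ, |∏ i, f (z i) - ∏ i, f (z i + (Pi.single j r : ι → ℝ) i)| =
      ∫ s, |f s - f (s + r)| := by
  set g : ι → ℝ → ℝ := fun i ↦ if i = j then fun s ↦ |f s - f (s + r)| else f
  have hsplit : ∀ φ : ι → ℝ → ℝ, (∀ i ≠ j, φ i = f) → ∀ z : ι → ℝ,
      ∏ i, φ i (z i) = φ j (z j) * ∏ i ∈ {j}ᶜ, f (z i) := fun φ hφ z ↦ by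
    rw [Fintype.prod_eq_mul_prod_compl j]
    congr 1
    exact Finset.prod_congr rfl fun i hi ↦ by rw [hφ i (by simpa using hi)]
  have hpoint : ∀ z : ι → ℝ,
      |∏ i, f (z i) - ∏ i, f (z i + (Pi.single j r : ι → ℝ) i)| = ∏ i, g i (z i) := fun z ↦ by
    rw [hsplit (fun _ ↦ f) (fun _ _ ↦ rfl),
      hsplit (fun i s ↦ f (s + (Pi.single j r : ι → ℝ) i)) (fun i hi ↦ by simp [hi]),
      hsplit g (fun i hi ↦ if_neg hi), ← sub_mul, abs_mul,
      abs_of_nonneg (Finset.prod_nonneg fun i _ ↦ hf0 (z i))]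
    simp [g]
  simp_rw [hpoint]
  rw [volume_pi, integral_fintype_prod_eq_prod g, Fintype.prod_eq_mul_prod_compl j,
    Finset.prod_eq_one fun i hi ↦ by simp_all [g], mul_one]
  simp [g]

section HeatKernel

variable {k : ℕ} {t : ℝ}

lemma heatKernel_eq_prod_gaussianPDFReal (ht : 0 < t) (x : EuclideanSpace ℝ (Fin k)) :
    heatKernel k t x = ∏ i, gaussianPDFReal 0 t.toNNReal (x i) := by
  simp only [heatKernel, gaussianPDFReal, sub_zero, Real.coe_toNNReal t ht.le,
    Finset.prod_mul_distrib, Finset.prod_const, Finset.card_univ, Fintype.card_fin,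
    ← Real.exp_sum, EuclideanSpace.real_norm_sq_eq, ← Finset.sum_div, Finset.sum_neg_distrib]
  congr 1
  rw [Real.sqrt_eq_rpow, ← Real.rpow_neg_one, ← Real.rpow_mul (by positivity),
    ← Real.rpow_natCast, ← Real.rpow_mul (by positivity)]
  congr 1
  ring

lemma heatKernel_map_linearIsometryEquiv
    (R : EuclideanSpace ℝ (Fin k) ≃ₗᵢ[ℝ] EuclideanSpace ℝ (Fin k)) (x : EuclideanSpace ℝ (Fin k)) :
    heatKernel k t (R x) = heatKernel k t x := by
  simp only [heatKernel, LinearIsometryEquiv.norm_map]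

lemma integral_abs_heatKernel_sub_heatKernel_add_single (ht : 0 < t) (j : Fin k) (r : ℝ) :
    ∫ z, |heatKernel k t z - heatKernel k t (z + EuclideanSpace.single j r)| =
      ∫ s, |gaussianPDFReal 0 t.toNNReal s - gaussianPDFReal 0 t.toNNReal (s + r)| := by
  rw [← (PiLp.volume_preserving_toLp (Fin k)).integral_comp
    (MeasurableEquiv.toLp 2 (Fin k → ℝ)).measurableEmbedding]
  simp only [heatKernel_eq_prod_gaussianPDFReal ht]
  exact integral_abs_prod_sub_prod_add_single (gaussianPDFReal_nonneg 0 _)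
    (integral_gaussianPDFReal_eq_one 0 (by simpa using ht)) j r

lemma integral_abs_heatKernel_sub_heatKernel_add_congr_norm {w w' : EuclideanSpace ℝ (Fin k)}
    (h : ‖w‖ = ‖w'‖) :
    ∫ z, |heatKernel k t z - heatKernel k t (z + w)| =
      ∫ z, |heatKernel k t z - heatKernel k t (z + w')| := by
  set R := Submodule.reflection (ℝ ∙ (w' - w))ᗮ
  have hR : R w' = w := Submodule.reflection_sub h.symm
  rw [← R.measurePreserving.integral_comp R.toMeasurableEquiv.measurableEmbedding]
  simp only [← hR, ← map_add, heatKernel_map_linearIsometryEquiv]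

end HeatKernel

theorem stmt_5 (k : ℕ) (hk : 1 ≤ k) :
    ∃ N₀ : ℝ, 0 < N₀ ∧
      ∀ t : ℝ, 0 < t → ∀ x y : EuclideanSpace ℝ (Fin k),
        ∫ z : EuclideanSpace ℝ (Fin k), |heatKernel k t (x + z) - heatKernel k t (y + z)| ≤
          N₀ * min (‖x - y‖ / t ^ ((1 : ℝ) / 2)) 1 := by
  refine ⟨2, two_pos, fun t ht x y ↦ ?_⟩
  let e₀ : Fin k := ⟨0, hk⟩
  calc ∫ z, |heatKernel k t (x + z) - heatKernel k t (y + z)|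
      = ∫ z, |heatKernel k t z - heatKernel k t (z + (y - x))| := by
        rw [← integral_add_left_eq_self
          (fun z ↦ |heatKernel k t z - heatKernel k t (z + (y - x))|) x]
        congr 1 with z
        rw [show x + z + (y - x) = y + z by abel]
    _ = ∫ z, |heatKernel k t z - heatKernel k t (z + EuclideanSpace.single e₀ ‖x - y‖)| :=
        integral_abs_heatKernel_sub_heatKernel_add_congr_norm
          (by rw [PiLp.norm_single, norm_norm, norm_sub_rev])
    _ = ∫ s, |gaussianPDFReal 0 t.toNNReal s - gaussianPDFReal 0 t.toNNReal (s + ‖x - y‖)| :=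
        integral_abs_heatKernel_sub_heatKernel_add_single ht e₀ _
    _ ≤ 2 * min (|‖x - y‖| / √(t.toNNReal : ℝ)) 1 :=
        integral_abs_gaussianPDFReal_sub_comp_add_le (by simpa using ht) _
    _ = 2 * min (‖x - y‖ / t ^ ((1 : ℝ) / 2)) 1 := by
        rw [abs_norm, Real.coe_toNNReal t ht.le, Real.sqrt_eq_rpow]
end

section
/- Let k ≥ 1 and β ∈ (0, min(2,k)). The function g(x) := ∫_{ℝ^k} ‖z‖^{-β} S(t, x - z) dz (for fixed t > 0, where S is the heat kernel) is well-defined, continuous, and satisfies sup_{x ∈ ℝ^k} g(x) = g(0) = C t^{-β/2}, where C = ∫_{ℝ^k} ‖w‖^{-β} S(1, w) dw. -/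
open Real MeasureTheory

/-!
Subordination: `Γ(β/2) ‖z‖^(-β) = ∫₀^∞ u^(β/2-1) e^(-u‖z‖²) du` writes the Riesz kernel as a
positive mixture of Gaussians. Convolving a Gaussian `e^(-u‖·‖²)` with the heat kernel gives a
centred Gaussian in `x` (complete the square), which is largest at `x = 0`; integrating over `u`
shows `g x ≤ g 0`. Integrability of `‖z‖^(-β) S(t, z)` for `β < k` is the radial integral
`∫₀^∞ r^(k-1-β) e^(-r²/2t) dr < ∞`, continuity follows by dominated convergence from
`S(t, x - z) ≤ 2^(k/2) e^(‖x‖²/2t) S(2t, z)`, and the value at `0` by the substitution `z = √t w`.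
-/

open Set Module

theorem ofReal_Gamma_mul_rpow_neg_eq_lintegral {β r : ℝ} (hβ : 0 < β) (hr : 0 < r) :
    ENNReal.ofReal (Gamma (β / 2) * r ^ (-β)) =
      ∫⁻ u in Ioi 0, ENNReal.ofReal (u ^ (β / 2 - 1)) * ENNReal.ofReal (exp (-(u * r ^ 2))) := by
  have hint : IntegrableOn (fun u : ℝ ↦ u ^ (β / 2 - 1) * exp (-(r ^ 2 * u))) (Ioi 0) := by
    simpa using integrableOn_rpow_mul_exp_neg_mul_rpow (s := β / 2 - 1) (p := 1)
      (by linarith) one_pos (by positivity : 0 < r ^ 2)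
  have hΓ : Gamma (β / 2) * r ^ (-β) = ∫ u in Ioi 0, u ^ (β / 2 - 1) * exp (-(r ^ 2 * u)) := by
    rw [integral_rpow_mul_exp_neg_mul_Ioi (by linarith) (by positivity), one_div,
      ← rpow_natCast, ← rpow_neg hr.le, ← rpow_mul hr.le, mul_comm]
    ring_nf
  rw [hΓ, ofReal_integral_eq_lintegral_ofReal hint]
  · refine setLIntegral_congr_fun measurableSet_Ioi fun u hu ↦ ?_
    rw [← ENNReal.ofReal_mul (rpow_nonneg (le_of_lt hu) _), mul_comm (r ^ 2)]
  · filter_upwards [ae_restrict_mem measurableSet_Ioi] with u (hu : 0 < u)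
    positivity

section

variable {E : Type*} [NormedAddCommGroup E] [MeasurableSpace E]

theorem ofReal_Gamma_mul_lintegral_rpow_neg_norm_mul [OpensMeasurableSpace E]
    (μ : Measure E) [SFinite μ] [NullSingletonClass μ] {β : ℝ} (hβ : 0 < β)
    {W : E → ENNReal} (hW : Measurable W) :
    ENNReal.ofReal (Gamma (β / 2)) * ∫⁻ z, ENNReal.ofReal (‖z‖ ^ (-β)) * W z ∂μ =
      ∫⁻ u in Ioi 0, ENNReal.ofReal (u ^ (β / 2 - 1)) *
        ∫⁻ z, ENNReal.ofReal (exp (-(u * ‖z‖ ^ 2))) * W z ∂μ := by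
  have hΓ : 0 ≤ Gamma (β / 2) := (Gamma_pos_of_pos (by linarith)).le
  calc ENNReal.ofReal (Gamma (β / 2)) * ∫⁻ z, ENNReal.ofReal (‖z‖ ^ (-β)) * W z ∂μ
      = ∫⁻ z, (∫⁻ u : ℝ in Ioi 0, ENNReal.ofReal (u ^ (β / 2 - 1)) *
          ENNReal.ofReal (exp (-(u * ‖z‖ ^ 2)))) * W z ∂μ := by
        rw [← lintegral_const_mul' _ _ ENNReal.ofReal_ne_top]
        refine lintegral_congr_ae ?_
        -- at `z = 0` the left side is the junk value `0 ^ (-β) = 0`, the right side is `∞`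
        filter_upwards [μ.ae_ne 0] with z hz
        rw [← mul_assoc, ← ENNReal.ofReal_mul hΓ,
          ofReal_Gamma_mul_rpow_neg_eq_lintegral hβ (norm_pos_iff.2 hz)]
    _ = ∫⁻ z, (∫⁻ u : ℝ in Ioi 0, ENNReal.ofReal (u ^ (β / 2 - 1)) *
          (ENNReal.ofReal (exp (-(u * ‖z‖ ^ 2))) * W z)) ∂μ := by
        refine lintegral_congr fun z ↦ ?_
        rw [← lintegral_mul_const _ (by fun_prop)]
        simp only [mul_assoc]
    _ = _ := by
        rw [lintegral_lintegral_swap (by fun_prop)]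
        refine lintegral_congr fun u ↦ ?_
        rw [lintegral_const_mul _ (by fun_prop)]

theorem integrable_rpow_neg_norm_mul_exp_neg_mul_sq [NormedSpace ℝ E] [FiniteDimensional ℝ E]
    [BorelSpace E] [Nontrivial E] (μ : Measure E) [μ.IsAddHaarMeasure] {β b : ℝ}
    (hβ : β < finrank ℝ E) (hb : 0 < b) :
    Integrable (fun z : E ↦ ‖z‖ ^ (-β) * exp (-b * ‖z‖ ^ 2)) μ := by
  refine (integrable_fun_norm_addHaar μ (f := fun r : ℝ ↦ r ^ (-β) * exp (-b * r ^ 2))).2 ?_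
  have hdim : 1 ≤ finrank ℝ E := finrank_pos
  refine (integrableOn_rpow_mul_exp_neg_mul_sq hb (s := finrank ℝ E - 1 - β)
    (by linarith)).congr_fun (fun y (hy : 0 < y) ↦ ?_) measurableSet_Ioi
  rw [smul_eq_mul, ← mul_assoc, ← rpow_natCast, ← rpow_add hy, Nat.cast_sub hdim, Nat.cast_one,
    sub_eq_add_neg _ β]

end

namespace heatKernel

variable {k : ℕ} {t : ℝ}

theorem nonneg (ht : 0 ≤ t) (x : EuclideanSpace ℝ (Fin k)) : 0 ≤ heatKernel k t x := by
  unfold heatKernel; positivity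

@[fun_prop]
theorem continuous (k : ℕ) (t : ℝ) : Continuous (heatKernel k t) := by
  unfold heatKernel; fun_prop

theorem neg (x : EuclideanSpace ℝ (Fin k)) : heatKernel k t (-x) = heatKernel k t x := by
  simp only [heatKernel, norm_neg]

theorem sqrt_smul (ht : 0 < t) (w : EuclideanSpace ℝ (Fin k)) :
    heatKernel k t (√t • w) = t ^ (-(k : ℝ) / 2) * heatKernel k 1 w := by
  simp only [heatKernel, norm_smul, norm_of_nonneg (sqrt_nonneg t), mul_pow,
    sq_sqrt ht.le, mul_one]
  rw [mul_rpow (by positivity) ht.le, show -(t * ‖w‖ ^ 2) / (2 * t) = -‖w‖ ^ 2 / 2 by field_simp]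
  ring

theorem sub_le (ht : 0 < t) (x z : EuclideanSpace ℝ (Fin k)) :
    heatKernel k t (x - z) ≤
      2 ^ ((k : ℝ) / 2) * exp (‖x‖ ^ 2 / (2 * t)) * heatKernel k (2 * t) z := by
  have hz : ‖z‖ ^ 2 ≤ 2 * ‖x‖ ^ 2 + 2 * ‖x - z‖ ^ 2 := by
    have : ‖z‖ ≤ ‖x‖ + ‖x - z‖ := by simpa using norm_sub_le x (x - z)
    nlinarith [sq_nonneg (‖x‖ - ‖x - z‖), norm_nonneg z]
  have hexp : -‖x - z‖ ^ 2 / (2 * t) ≤ ‖x‖ ^ 2 / (2 * t) + -‖z‖ ^ 2 / (2 * (2 * t)) := by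
    have : ‖x‖ ^ 2 / (2 * t) + -‖z‖ ^ 2 / (2 * (2 * t)) - -‖x - z‖ ^ 2 / (2 * t) =
        (2 * ‖x‖ ^ 2 + 2 * ‖x - z‖ ^ 2 - ‖z‖ ^ 2) / (4 * t) := by
      field_simp; ring
    linarith [div_nonneg (sub_nonneg.2 hz) (by positivity : (0 : ℝ) ≤ 4 * t)]
  calc heatKernel k t (x - z)
      ≤ (2 * π * t) ^ (-(k : ℝ) / 2) * exp (‖x‖ ^ 2 / (2 * t) + -‖z‖ ^ 2 / (2 * (2 * t))) := by
        unfold heatKernel; gcongr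
    _ = _ := by
        rw [heatKernel, exp_add, show 2 * π * (2 * t) = 2 * (2 * π * t) by ring,
          mul_rpow zero_le_two (by positivity : (0 : ℝ) ≤ 2 * π * t), neg_div,
          rpow_neg zero_le_two]
        field_simp

/-- Completing the square: the shift `z ↦ z + s • x`, `s = (1 + 2tu)⁻¹`, centres the product. -/
theorem exp_neg_mul_norm_sq_mul_sub_add_smul (ht : 0 < t) {u : ℝ} (hu : 0 ≤ u)
    (x z : EuclideanSpace ℝ (Fin k)) :
    exp (-(u * ‖z + (1 + 2 * t * u)⁻¹ • x‖ ^ 2)) *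
        heatKernel k t (x - (z + (1 + 2 * t * u)⁻¹ • x)) =
      exp (-(u * (1 + 2 * t * u)⁻¹ * ‖x‖ ^ 2)) * (exp (-(u * ‖z‖ ^ 2)) * heatKernel k t z) := by
  set s := (1 + 2 * t * u)⁻¹ with hs
  have hsub : x - (z + s • x) = (1 - s) • x - z := by
    rw [sub_smul, one_smul]; abel
  have hzx : ‖z + s • x‖ ^ 2 = ‖z‖ ^ 2 + 2 * (s * inner ℝ x z) + s ^ 2 * ‖x‖ ^ 2 := by
    rw [norm_add_sq_real, real_inner_smul_right, real_inner_comm, norm_smul, norm_eq_abs,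
      mul_pow, sq_abs]
  have hxz : ‖(1 - s) • x - z‖ ^ 2 =
      (1 - s) ^ 2 * ‖x‖ ^ 2 - 2 * ((1 - s) * inner ℝ x z) + ‖z‖ ^ 2 := by
    rw [norm_sub_sq_real, real_inner_smul_left, norm_smul, norm_eq_abs, mul_pow, sq_abs]
  simp only [heatKernel, hsub, hzx, hxz, mul_left_comm _ ((2 * π * t) ^ (-(k : ℝ) / 2)),
    ← exp_add]
  congr 2
  have : (1 + 2 * t * u) ≠ 0 := by positivity
  rw [hs]
  field_simp
  ring

theorem lintegral_exp_neg_mul_norm_sq_mul_sub_le (ht : 0 < t) {u : ℝ} (hu : 0 ≤ u)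
    (x : EuclideanSpace ℝ (Fin k)) :
    ∫⁻ z, ENNReal.ofReal (exp (-(u * ‖z‖ ^ 2))) * ENNReal.ofReal (heatKernel k t (x - z)) ≤
      ∫⁻ z, ENNReal.ofReal (exp (-(u * ‖z‖ ^ 2))) * ENNReal.ofReal (heatKernel k t z) := by
  set s := (1 + 2 * t * u)⁻¹
  calc ∫⁻ z, ENNReal.ofReal (exp (-(u * ‖z‖ ^ 2))) * ENNReal.ofReal (heatKernel k t (x - z))
      = ∫⁻ z, ENNReal.ofReal (exp (-(u * ‖z + s • x‖ ^ 2))) *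
          ENNReal.ofReal (heatKernel k t (x - (z + s • x))) :=
        (lintegral_add_right_eq_self (fun z ↦ ENNReal.ofReal (exp (-(u * ‖z‖ ^ 2))) *
          ENNReal.ofReal (heatKernel k t (x - z))) (s • x)).symm
    _ = ∫⁻ z, ENNReal.ofReal (exp (-(u * s * ‖x‖ ^ 2))) *
          (ENNReal.ofReal (exp (-(u * ‖z‖ ^ 2))) * ENNReal.ofReal (heatKernel k t z)) := by
        refine lintegral_congr fun z ↦ ?_
        rw [← ENNReal.ofReal_mul (exp_nonneg _), ← ENNReal.ofReal_mul (exp_nonneg _),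
          ← ENNReal.ofReal_mul (exp_nonneg _), exp_neg_mul_norm_sq_mul_sub_add_smul ht hu]
    _ ≤ _ := by
        rw [lintegral_const_mul' _ _ ENNReal.ofReal_ne_top]
        refine mul_le_of_le_one_left zero_le (ENNReal.ofReal_le_one.2 (exp_le_one_iff.2 ?_))
        have : 0 ≤ u * s * ‖x‖ ^ 2 := by positivity
        linarith

end heatKernel

section RieszHeat

variable {k : ℕ} {β t : ℝ}

theorem integrable_rpow_neg_norm_mul_heatKernel [NeZero k] (hβ : β < k) (ht : 0 < t) :
    Integrable fun z : EuclideanSpace ℝ (Fin k) ↦ ‖z‖ ^ (-β) * heatKernel k t z := by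
  refine ((integrable_rpow_neg_norm_mul_exp_neg_mul_sq volume (by simpa using hβ)
    (by positivity : 0 < (2 * t)⁻¹)).const_mul ((2 * π * t) ^ (-(k : ℝ) / 2))).congr
    (.of_forall fun z ↦ ?_)
  simp only [heatKernel, div_eq_inv_mul, neg_mul, mul_neg]
  ring

theorem lintegral_rpow_neg_norm_mul_heatKernel_sub_le [NeZero k] (hβ : 0 < β) (ht : 0 < t)
    (x : EuclideanSpace ℝ (Fin k)) :
    ∫⁻ z, ENNReal.ofReal (‖z‖ ^ (-β)) * ENNReal.ofReal (heatKernel k t (x - z)) ≤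
      ∫⁻ z, ENNReal.ofReal (‖z‖ ^ (-β)) * ENNReal.ofReal (heatKernel k t z) := by
  have hΓ : ENNReal.ofReal (Gamma (β / 2)) ≠ 0 :=
    ENNReal.ofReal_ne_zero_iff.2 (Gamma_pos_of_pos (by linarith))
  refine (ENNReal.mul_le_mul_iff_right hΓ ENNReal.ofReal_ne_top).1 ?_
  rw [ofReal_Gamma_mul_lintegral_rpow_neg_norm_mul volume hβ (by fun_prop),
    ofReal_Gamma_mul_lintegral_rpow_neg_norm_mul volume hβ (by fun_prop)]
  exact setLIntegral_mono' measurableSet_Ioi fun u hu ↦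
    mul_le_mul_right (heatKernel.lintegral_exp_neg_mul_norm_sq_mul_sub_le ht hu.out.le x) _

theorem integral_rpow_neg_norm_mul_heatKernel_sub_le [NeZero k] (hβ : 0 < β) (hβk : β < k)
    (ht : 0 < t) (x : EuclideanSpace ℝ (Fin k)) :
    ∫ z, ‖z‖ ^ (-β) * heatKernel k t (x - z) ≤ ∫ z, ‖z‖ ^ (-β) * heatKernel k t z := by
  have hnn : ∀ y z : EuclideanSpace ℝ (Fin k), 0 ≤ ‖z‖ ^ (-β) * heatKernel k t (y - z) :=
    fun y z ↦ mul_nonneg (rpow_nonneg (norm_nonneg z) _) (heatKernel.nonneg ht.le _)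
  rw [integral_eq_lintegral_of_nonneg_ae (.of_forall (hnn x))
      (Measurable.aestronglyMeasurable (by fun_prop)),
    integral_eq_lintegral_of_nonneg_ae
      (.of_forall fun z ↦ by simpa [heatKernel.neg] using hnn 0 z)
      (Measurable.aestronglyMeasurable (by fun_prop))]
  refine ENNReal.toReal_mono
    (integrable_rpow_neg_norm_mul_heatKernel hβk ht).lintegral_lt_top.ne ?_
  simp only [ENNReal.ofReal_mul (rpow_nonneg (norm_nonneg _) _)]
  exact lintegral_rpow_neg_norm_mul_heatKernel_sub_le hβ ht x

theorem continuous_integral_rpow_neg_norm_mul_heatKernel_sub [NeZero k] (hβ : β < k)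
    (ht : 0 < t) : Continuous fun x : EuclideanSpace ℝ (Fin k) ↦
      ∫ z, ‖z‖ ^ (-β) * heatKernel k t (x - z) := by
  refine continuous_iff_continuousAt.2 fun x₀ ↦ continuousAt_of_dominated
    (bound := fun z ↦ 2 ^ ((k : ℝ) / 2) * exp ((‖x₀‖ + 1) ^ 2 / (2 * t)) *
      (‖z‖ ^ (-β) * heatKernel k (2 * t) z))
    (.of_forall fun x ↦ Measurable.aestronglyMeasurable (by fun_prop)) ?_
    ((integrable_rpow_neg_norm_mul_heatKernel hβ (by positivity)).const_mul _)
    (.of_forall fun z ↦ by fun_prop)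
  filter_upwards [Metric.ball_mem_nhds x₀ one_pos] with x hx
  refine .of_forall fun z ↦ ?_
  have hx : ‖x‖ ≤ ‖x₀‖ + 1 := by
    have := norm_le_norm_add_norm_sub' x x₀
    rw [Metric.mem_ball, dist_eq_norm] at hx
    linarith
  rw [norm_of_nonneg (mul_nonneg (rpow_nonneg (norm_nonneg z) _) (heatKernel.nonneg ht.le _))]
  calc ‖z‖ ^ (-β) * heatKernel k t (x - z)
      ≤ ‖z‖ ^ (-β) * (2 ^ ((k : ℝ) / 2) * exp (‖x‖ ^ 2 / (2 * t)) * heatKernel k (2 * t) z) := by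
        gcongr; exact heatKernel.sub_le ht x z
    _ ≤ _ := by
        rw [mul_left_comm]
        gcongr
        exact mul_nonneg (rpow_nonneg (norm_nonneg z) _) (heatKernel.nonneg (by positivity) _)

theorem integral_rpow_neg_norm_mul_heatKernel (ht : 0 < t) :
    ∫ z : EuclideanSpace ℝ (Fin k), ‖z‖ ^ (-β) * heatKernel k t z =
      (∫ w : EuclideanSpace ℝ (Fin k), ‖w‖ ^ (-β) * heatKernel k 1 w) * t ^ (-β / 2) := by
  have hscale : ∀ w : EuclideanSpace ℝ (Fin k), ‖√t • w‖ ^ (-β) * heatKernel k t (√t • w) =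
      t ^ (-(k : ℝ) / 2) * (t ^ (-β / 2) * (‖w‖ ^ (-β) * heatKernel k 1 w)) := fun w ↦ by
    rw [heatKernel.sqrt_smul ht, norm_smul, norm_of_nonneg (sqrt_nonneg t),
      mul_rpow (sqrt_nonneg t) (norm_nonneg w), sqrt_eq_rpow, ← rpow_mul ht.le]
    ring_nf
  have hdet : (√t ^ k)⁻¹ = t ^ (-(k : ℝ) / 2) := by
    rw [sqrt_eq_rpow, ← rpow_natCast, ← rpow_mul ht.le, ← rpow_neg ht.le]
    ring_nf
  have h := Measure.integral_comp_smul_of_nonneg volume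
    (fun z : EuclideanSpace ℝ (Fin k) ↦ ‖z‖ ^ (-β) * heatKernel k t z) √t (hR := sqrt_nonneg t)
  simp only [hscale, integral_const_mul, finrank_euclideanSpace_fin, hdet, smul_eq_mul] at h
  rw [mul_comm, ← mul_left_cancel₀ (rpow_pos_of_pos ht (-(k : ℝ) / 2)).ne' h]

end RieszHeat

theorem stmt_19_general (k : ℕ) (β : ℝ) (hβ : 0 < β) (hβ2 : β < min 2 (k : ℝ))
    (t : ℝ) (ht : 0 < t) :
    let g : EuclideanSpace ℝ (Fin k) → ℝ :=
      fun x => ∫ z : EuclideanSpace ℝ (Fin k), ‖z‖ ^ (-β) * heatKernel k t (x - z)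
    Integrable (fun z : EuclideanSpace ℝ (Fin k) => ‖z‖ ^ (-β) * heatKernel k t z) ∧
    Continuous g ∧ (∀ x, g x ≤ g 0) ∧
    g 0 = (∫ w : EuclideanSpace ℝ (Fin k), ‖w‖ ^ (-β) * heatKernel k 1 w) * t ^ (-β / 2) := by
  intro g
  have hβk : β < k := hβ2.trans_le (min_le_right _ _)
  have : NeZero k := ⟨by rintro rfl; simp at hβk; linarith⟩
  have hg0 : g 0 = ∫ z, ‖z‖ ^ (-β) * heatKernel k t z := by
    simp only [g, zero_sub, heatKernel.neg]
  refine ⟨integrable_rpow_neg_norm_mul_heatKernel hβk ht,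
    continuous_integral_rpow_neg_norm_mul_heatKernel_sub hβk ht, fun x ↦ ?_,
    hg0.trans (integral_rpow_neg_norm_mul_heatKernel ht)⟩
  rw [hg0]
  exact integral_rpow_neg_norm_mul_heatKernel_sub_le hβ hβk ht x

theorem stmt_19 (k : ℕ) (hk : 1 ≤ k) (β : ℝ) (hβ : 0 < β) (hβ2 : β < min 2 (k : ℝ))
    (t : ℝ) (ht : 0 < t) :
    let g : EuclideanSpace ℝ (Fin k) → ℝ :=
      fun x => ∫ z : EuclideanSpace ℝ (Fin k), ‖z‖ ^ (-β) * heatKernel k t (x - z)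
    Integrable (fun z : EuclideanSpace ℝ (Fin k) => ‖z‖ ^ (-β) * heatKernel k t z) ∧
    Continuous g ∧ (∀ x, g x ≤ g 0) ∧
    g 0 = (∫ w : EuclideanSpace ℝ (Fin k), ‖w‖ ^ (-β) * heatKernel k 1 w) * t ^ (-β / 2) :=
  stmt_19_general k β hβ hβ2 t ht
end
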